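/- Let G be a strong digraph on a finite vertex type V with diameter at most 2, i.e., dist(u,v) ≤ 2 for all vertices u, v. Suppose there exist pairwise distinct vertices u, v, w such that (u,v), (v,u) and (w,v) are arcs of G, while (v,w), (u,w) and (w,u) are not arcs of G. Then the second distance ideal I_2(G) is the unit ideal of ℤ[x_v : v ∈ V]. -/
import Mathlib


open MvPolynomial

/-- The ideal generated by the determinants of all `k × k` submatrices of a square
matrix `M` (choices of `k` rows and `k` columns). -/
def minorsIdeal {R : Type*} [CommRing R] {m : Type*} (M : Matrix m m R) (k : ℕ) : Ideal R :=
  Ideal.span { p | ∃ (r c : Fin k → m), Function.Injective r ∧ Function.Injective c ∧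
    p = (M.submatrix r c).det }

/-- A directed walk of length `k` from `u` to `v` in the digraph with arc relation `A`. -/
def IsWalk {V : Type*} (A : V → V → Prop) (k : ℕ) (u v : V) : Prop :=
  ∃ f : Fin (k + 1) → V, f 0 = u ∧ f (Fin.last k) = v ∧
    ∀ i : Fin k, A (f i.castSucc) (f i.succ)

/-- The distance from `u` to `v`: the minimum length of a directed walk from `u` to `v`. -/
noncomputable def ddist {V : Type*} (A : V → V → Prop) (u v : V) : ℕ :=
  sInf {k | IsWalk A k u v}

/-- The matrix `D_X(G)`: variable `x_v` at the `(v,v)` entry, and the constant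
`dist(u,v)` at the `(u,v)` entry for `u ≠ v`. -/
noncomputable def distDX {V : Type*} [DecidableEq V] (A : V → V → Prop) :
    Matrix V V (MvPolynomial V ℤ) :=
  Matrix.of fun u v => if u = v then X u else C (ddist A u v : ℤ)

lemma isWalk_zero {V : Type*} {A : V → V → Prop} {u v : V} (h : IsWalk A 0 u v) : u = v := by
  obtain ⟨f, h0, h1, -⟩ := h
  rw [← h0, ← h1]; rfl

lemma isWalk_one {V : Type*} {A : V → V → Prop} {u v : V} (h : IsWalk A 1 u v) : A u v := by
  obtain ⟨f, h0, h1, ha⟩ := h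
  have := ha 0
  rw [show (0 : Fin 1).castSucc = 0 from rfl, show (0 : Fin 1).succ = Fin.last 1 from rfl,
    h0, h1] at this
  exact this

lemma isWalk_one_of {V : Type*} {A : V → V → Prop} {u v : V} (h : A u v) : IsWalk A 1 u v :=
  ⟨![u, v], rfl, rfl, fun i => by fin_cases i; simpa⟩

lemma ddist_eq_one {V : Type*} {A : V → V → Prop} {u v : V} (hne : u ≠ v) (h : A u v) :
    ddist A u v = 1 := by
  have h1 : 1 ∈ {k | IsWalk A k u v} := isWalk_one_of h
  refine le_antisymm (Nat.sInf_le h1) ?_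
  rw [Nat.one_le_iff_ne_zero]
  intro h0
  rcases Nat.sInf_eq_zero.mp h0 with h0' | he
  · exact hne (isWalk_zero h0')
  · rw [he] at h1; exact h1

lemma ddist_eq_two {V : Type*} {A : V → V → Prop} {u v : V} (hne : u ≠ v) (h : ¬ A u v)
    (hex : ∃ k, IsWalk A k u v) (hle : ddist A u v ≤ 2) : ddist A u v = 2 := by
  refine le_antisymm hle ?_
  have hmem : ddist A u v ∈ {k | IsWalk A k u v} := Nat.sInf_mem hex
  by_contra hlt
  have : ddist A u v = 0 ∨ ddist A u v = 1 := by omega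
  rcases this with h' | h' <;> rw [h'] at hmem
  · exact hne (isWalk_zero hmem)
  · exact h (isWalk_one hmem)

lemma inj_pair {V : Type*} {a b : V} (h : a ≠ b) : Function.Injective ![a, b] := by
  intro i j hij
  fin_cases i <;> fin_cases j <;> simp_all

/-- Pattern F₅: a strong digraph of diameter at most 2 containing the pattern `F₅`
has trivial second distance ideal. -/
theorem second_ideal_trivial_of_pattern_F5 {V : Type*} [Fintype V] [DecidableEq V]
    (A : V → V → Prop) (hirr : Irreflexive A)
    (hstrong : ∀ u v : V, ∃ k, IsWalk A k u v)
    (hdiam : ∀ u v : V, ddist A u v ≤ 2)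
    (u v w : V)
    (huv : u ≠ v) (huw : u ≠ w) (hvw : v ≠ w)
    (h1 : A u v) (h2 : A v u) (h3 : A w v)
    (h4 : ¬ A v w) (h5 : ¬ A u w) (h6 : ¬ A w u) :
    minorsIdeal (distDX A) 2 = ⊤ := by
  have dvu : ddist A v u = 1 := ddist_eq_one huv.symm h2
  have duv : ddist A u v = 1 := ddist_eq_one huv h1
  have dwv : ddist A w v = 1 := ddist_eq_one hvw.symm h3
  have dwu : ddist A w u = 2 := ddist_eq_two huw.symm h6 (hstrong w u) (hdiam w u)
  have dvw : ddist A v w = 2 := ddist_eq_two hvw h4 (hstrong v w) (hdiam v w)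
  have duw : ddist A u w = 2 := ddist_eq_two huw h5 (hstrong u w) (hdiam u w)
  set M := distDX A with hM
  have m1 : ((M.submatrix ![v, w] ![u, v]).det) ∈ minorsIdeal M 2 :=
    Ideal.subset_span ⟨![v, w], ![u, v], inj_pair hvw, inj_pair huv, rfl⟩
  have m2 : ((M.submatrix ![u, v] ![v, w]).det) ∈ minorsIdeal M 2 :=
    Ideal.subset_span ⟨![u, v], ![v, w], inj_pair huv, inj_pair hvw, rfl⟩
  have key : (M.submatrix ![v, w] ![u, v]).det - (M.submatrix ![u, v] ![v, w]).det = -1 := by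
    rw [Matrix.det_fin_two, Matrix.det_fin_two]
    simp only [Matrix.submatrix_apply, hM, distDX, Matrix.of_apply, Matrix.cons_val_zero,
      Matrix.cons_val_one, Matrix.head_cons, if_neg huv.symm, if_neg huw.symm,
      if_neg hvw.symm, if_neg huv, if_neg huw, if_neg hvw, if_true,
      dvu, dwu, dwv, duv, duw, dvw]
    push_cast
    ring_nf
    rw [map_one, map_ofNat]
    ring
  have : (-1 : MvPolynomial V ℤ) ∈ minorsIdeal M 2 := key ▸ Ideal.sub_mem _ m1 m2
  exact Ideal.eq_top_of_isUnit_mem _ this (IsUnit.neg isUnit_one)
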